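/- arXiv:1904.07352 — 5 statements merged into one kernel-verified Lean document; each statement's English description precedes it below -/
import Mathlib

section
/- Let p be an odd prime, let l be an odd integer, let k ≥ 1, and let i_1, …, i_k be integers such that |i_j| is congruent to 0 or 1 modulo 2(p−1) for every 1 ≤ j ≤ k. Then the following two conditions are equivalent. Condition (A): for every 1 ≤ j < k, either 1 < i_j < p·i_{j+1} or p·i_{j+1} < i_j ≤ 0; and for every 0 ≤ t ≤ k−1, either 1 < i_{t+1} < (p−1)(l + i_{t+2} + … + i_k) or (p−1)(l + i_{t+2} + … + i_k) < i_{t+1} ≤ 0. Condition (B): for every 1 ≤ j < k, either 1 < i_j < p·i_{j+1} or p·i_{j+1} < i_j ≤ 0; and either 1 < i_k ≤ (p−1)l or (p−1)l ≤ i_k ≤ 0. -/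
/-!
Condition (B) is the `t = k - 1` instance of condition (A) with the strict inequalities
weakened, so (A) implies (B). Conversely, the congruence hypothesis forbids
`i k = (p - 1) l`, since `|(p - 1) l|` is `p - 1` modulo `2 (p - 1)` for odd `l`; so (B) holds
strictly, and a descending induction on `t` propagates it: if `i (t + 2)` lies strictly
inside its window and `i (t + 1)` lies between `1` and `p · i (t + 2)` (or between
`p · i (t + 2)` and `0`), then `i (t + 1)` lies in the window shifted by `(p - 1) · i (t + 2)`.
-/

open Finset

def InWindow (a c : ℤ) : Prop :=
  (1 < a ∧ a < c) ∨ (c < a ∧ a ≤ 0)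

theorem inWindow_of_le_of_ne {a c : ℤ} (h : (1 < a ∧ a ≤ c) ∨ (c ≤ a ∧ a ≤ 0)) (hne : a ≠ c) :
    InWindow a c := by
  rcases h with ⟨h1, h2⟩ | ⟨h1, h2⟩
  · exact Or.inl ⟨h1, lt_of_le_of_ne h2 hne⟩
  · exact Or.inr ⟨lt_of_le_of_ne h1 hne.symm, h2⟩

theorem inWindow_add_sub_one_mul (p : ℕ) {a b c : ℤ} (hab : InWindow a (p * b))
    (hbc : InWindow b c) : InWindow a (c + (p - 1) * b) := by
  have hp : (0 : ℤ) ≤ p := Int.natCast_nonneg p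
  rcases hab with ⟨ha1, ha2⟩ | ⟨ha1, ha2⟩ <;> rcases hbc with ⟨hb1, hb2⟩ | ⟨hb1, hb2⟩
  · exact Or.inl ⟨ha1, by linarith⟩
  · nlinarith
  · nlinarith
  · exact Or.inr ⟨by linarith, ha2⟩

theorem Int.abs_mul_emod_two_mul_of_odd {n l : ℤ} (hn : 0 < n) (hl : Odd l) :
    |n * l| % (2 * n) = n := by
  obtain ⟨m, hm⟩ := odd_abs.mpr hl
  rw [abs_mul, abs_of_pos hn, hm, show n * (2 * m + 1) = n + 2 * n * m by ring,
    Int.add_mul_emod_self_left, Int.emod_eq_of_lt hn.le (by linarith)]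

theorem sum_Icc_eq_add_sum_Icc (f : ℕ → ℤ) {m k : ℕ} (h : m ≤ k) :
    ∑ j ∈ Icc m k, f j = f m + ∑ j ∈ Icc (m + 1) k, f j := by
  rw [Icc_eq_cons_Ioc h, sum_cons, Finset.Icc_add_one_left_eq_Ioc]

theorem inWindow_excess (p : ℕ) (l : ℤ) (k : ℕ) (i : ℕ → ℤ)
    (hchain : ∀ j, 1 ≤ j → j < k → InWindow (i j) (p * i (j + 1)))
    (hlast : InWindow (i k) ((p - 1) * l)) {m : ℕ} (hm : m ≤ k) (hm1 : 1 ≤ m) :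
    InWindow (i m) ((p - 1) * (l + ∑ j ∈ Icc (m + 1) k, i j)) := by
  induction hm using Nat.decreasingInduction with
  | self => simpa [Icc_eq_empty_of_lt (Nat.lt_succ_self k)] using hlast
  | of_succ m hmk ih =>
    have hstep := inWindow_add_sub_one_mul p (hchain m hm1 hmk) (ih (by omega))
    rw [sum_Icc_eq_add_sum_Icc i (show m + 1 ≤ k by omega)]
    convert hstep using 1
    ring

/-- Rephrasing of the admissibility conditions in the proof of Theorem 6.1 of
Brantner–Mathew (free partition Lie algebras on one odd generator, odd prime `p`). -/
theorem stmt2 (p : ℕ) (hp : Nat.Prime p) (hpodd : Odd p) (l : ℤ) (hl : Odd l)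
    (k : ℕ) (hk : 1 ≤ k) (i : ℕ → ℤ)
    (hcong : ∀ j, 1 ≤ j → j ≤ k →
      |i j| % (2 * ((p : ℤ) - 1)) = 0 ∨ |i j| % (2 * ((p : ℤ) - 1)) = 1) :
    ((∀ j, 1 ≤ j → j < k →
        ((1 < i j ∧ i j < (p : ℤ) * i (j + 1)) ∨ ((p : ℤ) * i (j + 1) < i j ∧ i j ≤ 0))) ∧
      (∀ t, t ≤ k - 1 →
        ((1 < i (t + 1) ∧
            i (t + 1) < ((p : ℤ) - 1) * (l + ∑ j ∈ Finset.Icc (t + 2) k, i j)) ∨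
          (((p : ℤ) - 1) * (l + ∑ j ∈ Finset.Icc (t + 2) k, i j) < i (t + 1) ∧
            i (t + 1) ≤ 0))))
    ↔
    ((∀ j, 1 ≤ j → j < k →
        ((1 < i j ∧ i j < (p : ℤ) * i (j + 1)) ∨ ((p : ℤ) * i (j + 1) < i j ∧ i j ≤ 0))) ∧
      ((1 < i k ∧ i k ≤ ((p : ℤ) - 1) * l) ∨ (((p : ℤ) - 1) * l ≤ i k ∧ i k ≤ 0))) := by
  have hk1 : k - 1 + 1 = k := by omega
  refine and_congr_right fun hchain => ⟨fun hexcess => ?_, fun hlast => ?_⟩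
  · have h := hexcess (k - 1) le_rfl
    rw [hk1, Icc_eq_empty_of_lt (by omega), sum_empty, add_zero] at h
    rcases h with ⟨h1, h2⟩ | ⟨h1, h2⟩
    · exact Or.inl ⟨h1, h2.le⟩
    · exact Or.inr ⟨h1.le, h2⟩
  · have hp3 : (3 : ℤ) ≤ p := by
      have := hp.two_le
      obtain ⟨m, rfl⟩ := hpodd
      omega
    have hne : i k ≠ (p - 1) * l := by
      intro h
      have hmod := Int.abs_mul_emod_two_mul_of_odd (n := (p : ℤ) - 1) (by omega) hl
      rw [← h] at hmod
      rcases hcong k hk le_rfl with hc | hc <;> omega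
    intro t ht
    exact inWindow_excess p l k i hchain (inWindow_of_le_of_ne hlast hne) (by omega) (by omega)
end

section
/- Let l be an integer, let k ≥ 1, and let i_1, …, i_k be integers. Then the following two conditions are equivalent. Condition (A): for every 1 ≤ j < k, either 1 < i_j < 2·i_{j+1} or 2·i_{j+1} < i_j ≤ 0; and for every 0 ≤ t ≤ k−1, either 1 < i_{t+1} ≤ l + i_{t+2} + … + i_k or l + i_{t+2} + … + i_k ≤ i_{t+1} ≤ 0. Condition (B): for every 1 ≤ j < k, either 1 < i_j < 2·i_{j+1} or 2·i_{j+1} < i_j ≤ 0; and either 1 < i_k ≤ l or l ≤ i_k ≤ 0. -/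
lemma sum_split (i : ℕ → ℤ) (a k : ℕ) (h : a ≤ k) :
    ∑ j ∈ Finset.Icc a k, i j = i a + ∑ j ∈ Finset.Icc (a + 1) k, i j := by
  rw [← Finset.insert_Icc_add_one_left_eq_Icc h, Finset.sum_insert (by simp)]

/-- Rephrasing of the admissibility conditions in the proof of Theorem 6.1 of
Brantner–Mathew at the prime `p = 2` (free partition Lie algebras on one generator). -/
theorem stmt3 (l : ℤ) (k : ℕ) (hk : 1 ≤ k) (i : ℕ → ℤ) :
    ((∀ j, 1 ≤ j → j < k →
        ((1 < i j ∧ i j < 2 * i (j + 1)) ∨ (2 * i (j + 1) < i j ∧ i j ≤ 0))) ∧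
      (∀ t, t ≤ k - 1 →
        ((1 < i (t + 1) ∧ i (t + 1) ≤ l + ∑ j ∈ Finset.Icc (t + 2) k, i j) ∨
          (l + ∑ j ∈ Finset.Icc (t + 2) k, i j ≤ i (t + 1) ∧ i (t + 1) ≤ 0))))
    ↔
    ((∀ j, 1 ≤ j → j < k →
        ((1 < i j ∧ i j < 2 * i (j + 1)) ∨ (2 * i (j + 1) < i j ∧ i j ≤ 0))) ∧
      ((1 < i k ∧ i k ≤ l) ∨ (l ≤ i k ∧ i k ≤ 0))) := by
  have hsum : ∑ j ∈ Finset.Icc (k + 1) k, i j = 0 := by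
    rw [Finset.Icc_eq_empty (by omega)]; simp
  constructor
  · rintro ⟨h1, h2⟩
    refine ⟨h1, ?_⟩
    have := h2 (k - 1) (le_refl _)
    have e1 : k - 1 + 1 = k := by omega
    have e2 : k - 1 + 2 = k + 1 := by omega
    rw [e1, e2, hsum] at this
    simpa using this
  · rintro ⟨h1, h2⟩
    refine ⟨h1, ?_⟩
    -- prove by descending induction: for all n, t with t + n = k - 1
    have key : ∀ n t, t + n = k - 1 →
        ((1 < i (t + 1) ∧ i (t + 1) ≤ l + ∑ j ∈ Finset.Icc (t + 2) k, i j) ∨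
          (l + ∑ j ∈ Finset.Icc (t + 2) k, i j ≤ i (t + 1) ∧ i (t + 1) ≤ 0)) := by
      intro n
      induction n with
      | zero =>
        intro t ht
        have e1 : t + 1 = k := by omega
        have e2 : t + 2 = k + 1 := by omega
        rw [e1, e2, hsum]
        simpa using h2
      | succ n ih =>
        intro t ht
        have hih := ih (t + 1) (by omega)
        have hadj := h1 (t + 1) (by omega) (by omega)
        have hle : t + 2 ≤ k := by omega
        rw [sum_split i (t + 2) k hle]
        have e3 : t + 1 + 1 = t + 2 := by ring
        have e4 : t + 1 + 2 = t + 2 + 1 := by ring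
        rw [e3, e4] at hih
        rw [e3] at hadj
        set S := ∑ j ∈ Finset.Icc (t + 2 + 1) k, i j with hS
        omega
    intro t ht
    exact key (k - 1 - t) t (by omega)
end

section
/- Let p be an odd prime, let l be an odd integer, let k ≥ 1, and let i_1, …, i_k be integers each congruent to 0 or −1 modulo 2(p−1). Then the following two conditions are equivalent. Condition (A): i_j > p·i_{j+1} for every 1 ≤ j < k; and i_{t+1} > (p−1)(l + i_{t+2} + … + i_k) for every 0 ≤ t ≤ k−1. Condition (B): i_j > p·i_{j+1} for every 1 ≤ j < k; and (p−1)·l ≤ i_k. -/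
/-!
Condition (A) follows from (B) by descending induction on `t`: if
`(p - 1) (l + i_{t+3} + ⋯ + i_k) < i_{t+2}`, adding `(p - 1) i_{t+2}` to both sides gives
`(p - 1) (l + i_{t+2} + ⋯ + i_k) < p i_{t+2} < i_{t+1}`. The induction starts from the strict
inequality `(p - 1) l < i_k`, and `i_k = (p - 1) l` is ruled out by parity: `2(p - 1)` cannot
divide `(p - 1) l` since `l` is odd, and `(p - 1) l + 1` is odd since `p - 1` is even.
-/

open Finset

theorem Int.ne_mul_of_modEq_zero_or_neg_one {n l x : ℤ} (hn : Even n) (hn0 : n ≠ 0) (hl : Odd l)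
    (hx : x ≡ 0 [ZMOD 2 * n] ∨ x ≡ -1 [ZMOD 2 * n]) : x ≠ n * l := by
  rintro rfl
  rcases hx with h | h
  · have h2l : 2 ∣ l := by
      rw [← mul_dvd_mul_iff_right hn0, mul_comm l]
      exact Int.modEq_zero_iff_dvd.mp h
    exact Int.not_even_iff_odd.mpr hl (even_iff_two_dvd.mpr h2l)
  · have h2 : 2 ∣ -1 - n * l := (dvd_mul_right 2 n).trans h.dvd
    obtain ⟨r, hr⟩ := hn.mul_right l
    omega

theorem sub_one_mul_add_sum_Ioc_lt {R : Type*} [CommRing R] [LinearOrder R]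
    [IsStrictOrderedRing R] {p l : R} {i : ℕ → R} {k : ℕ}
    (hchain : ∀ j, 1 ≤ j → j < k → p * i (j + 1) < i j) (hlast : (p - 1) * l < i k) :
    ∀ s ≤ k, 1 ≤ s → (p - 1) * (l + ∑ j ∈ Ioc s k, i j) < i s := by
  intro s hs
  induction hs using Nat.decreasingInduction with
  | self => intro; simpa using hlast
  | of_succ s hsk ih =>
    intro hs1
    rw [← Icc_add_one_left_eq_Ioc, ← Ioc_insert_left hsk, sum_insert left_notMem_Ioc]
    linarith [ih (by omega), hchain s hs1 hsk]

/-- Rephrasing of the admissibility conditions in the proof of Theorem 6.2 of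
Brantner–Mathew (free spectral partition Lie algebras on one odd generator, odd prime `p`). -/
theorem stmt4 (p : ℕ) (hp : Nat.Prime p) (hpodd : Odd p) (l : ℤ) (hl : Odd l)
    (k : ℕ) (hk : 1 ≤ k) (i : ℕ → ℤ)
    (hcong : ∀ j, 1 ≤ j → j ≤ k →
      Int.ModEq (2 * ((p : ℤ) - 1)) (i j) 0 ∨ Int.ModEq (2 * ((p : ℤ) - 1)) (i j) (-1)) :
    ((∀ j, 1 ≤ j → j < k → (p : ℤ) * i (j + 1) < i j) ∧
      (∀ t, t ≤ k - 1 →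
        ((p : ℤ) - 1) * (l + ∑ j ∈ Finset.Icc (t + 2) k, i j) < i (t + 1)))
    ↔
    ((∀ j, 1 ≤ j → j < k → (p : ℤ) * i (j + 1) < i j) ∧
      ((p : ℤ) - 1) * l ≤ i k) := by
  refine and_congr_right fun hchain => ⟨fun hadm => ?_, fun hlast => ?_⟩
  · have h := hadm (k - 1) le_rfl
    rw [Nat.sub_add_cancel hk, Icc_eq_empty (by omega), sum_empty, add_zero] at h
    exact h.le
  · have hp1 : (p : ℤ) - 1 ≠ 0 := by have := hp.two_le; omega
    have hp1even : Even ((p : ℤ) - 1) := by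
      obtain ⟨q, rfl⟩ := hpodd
      exact ⟨q, by push_cast; ring⟩
    have hlt : ((p : ℤ) - 1) * l < i k :=
      hlast.lt_of_ne (Int.ne_mul_of_modEq_zero_or_neg_one hp1even hp1 hl (hcong k hk le_rfl)).symm
    intro t ht
    have h := sub_one_mul_add_sum_Ioc_lt hchain hlt (t + 1) (by omega) (by omega)
    rwa [← Icc_add_one_left_eq_Ioc] at h
end

section
/- Let P be a finite partially ordered set, regarded as a category, let D be a category with an initial object, and let T be a class of morphisms of D that contains all isomorphisms, is closed under composition, and has the property that the pushout of any morphism in T along any morphism in T exists in D and again belongs to T. Let G : P → D be a functor such that for every x ∈ P the colimit of the restriction of G to the full subposet {y ∈ P : y < x} exists in D, and the canonical morphism colim_{y < x} G(y) → G(x) belongs to T. Then the colimit of G over P exists in D, and the unique morphism from the initial object of D to colim_P G belongs to T. -/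
open CategoryTheory CategoryTheory.Limits

universe u v w
section
variable {P : Type u} [PartialOrder P] {D : Type v} [Category.{w} D]

def subMono (Q : Set P) : Monotone (fun y : Q => (y : P)) := fun _ _ h => h

def FQ (G : P ⥤ D) (Q : Set P) : Q ⥤ D := (subMono Q).functor ⋙ G

lemma ltSub {Q : Set P} (hQ : ∀ ⦃a b : P⦄, a ≤ b → b ∈ Q → a ∈ Q) {x : P} (hx : x ∈ Q) :
    {y : P | y < x} ⊆ Q \ {x} := fun y hy => ⟨hQ (le_of_lt hy) hx, ne_of_lt hy⟩

lemma posetMapComp (G : P ⥤ D) {a b c : P} (f : a ⟶ b) (hb : b = c) (g : a ⟶ c) :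
    G.map f ≫ eqToHom (congrArg G.obj hb) = G.map g := by
  subst hb
  simp only [eqToHom_refl, Category.comp_id]
  exact congrArg G.map (Subsingleton.elim f g)

def restrictCocone (G : P ⥤ D) {Q₀ Q : Set P} (h : Q₀ ⊆ Q) (c : Cocone (FQ G Q)) :
    Cocone (FQ G Q₀) where
  pt := c.pt
  ι := {
    app := fun y => c.ι.app ⟨y.1, h y.2⟩
    naturality := fun y z f => by
      have := c.ι.naturality (show (⟨y.1, h y.2⟩ : Q) ⟶ ⟨z.1, h z.2⟩ from homOfLE (leOfHom f))
      exact this }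

@[simp] lemma restrictCocone_pt (G : P ⥤ D) {Q₀ Q : Set P} (h : Q₀ ⊆ Q) (c : Cocone (FQ G Q)) :
    (restrictCocone G h c).pt = c.pt := rfl

@[simp] lemma restrictCocone_app (G : P ⥤ D) {Q₀ Q : Set P} (h : Q₀ ⊆ Q) (c : Cocone (FQ G Q))
    (y : Q₀) : (restrictCocone G h c).ι.app y = c.ι.app ⟨y.1, h y.2⟩ := rfl

lemma step (T : MorphismProperty D)
    (hcomp : ∀ ⦃X Y Z : D⦄ (f : X ⟶ Y) (g : Y ⟶ Z), T f → T g → T (f ≫ g))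
    (hpushout : ∀ ⦃X Y Z : D⦄ (f : X ⟶ Y) (g : X ⟶ Z), T f → T g →
      ∃ (W : D) (h : Y ⟶ W) (i : Z ⟶ W), IsPushout f g h i ∧ T i)
    (G : P ⥤ D)
    (hG : ∀ x : P,
      ∃ (c : Cocone ((show Monotone (fun y : {y : P // y < x} => (y : P)) from
            fun _ _ h => h).functor ⋙ G)) (_ : IsColimit c) (φ : c.pt ⟶ G.obj x),
        (∀ y : {y : P // y < x}, c.ι.app y ≫ φ = G.map (homOfLE y.2.le)) ∧ T φ)
    {Q : Set P} (hQ : ∀ ⦃a b : P⦄, a ≤ b → b ∈ Q → a ∈ Q)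
    {x : P} (hx : x ∈ Q) (hmax : ∀ y ∈ Q, x ≤ y → y = x)
    (c'' : Cocone (FQ G (Q \ {x}))) (hc'' : IsColimit c'')
    (hL : ∀ (c₀ : Cocone (FQ G {y | y < x})) (hc₀ : IsColimit c₀),
      T (hc₀.desc (restrictCocone G (ltSub hQ hx) c''))) :
    ∃ (c : Cocone (FQ G Q)) (_ : IsColimit c) (i : c''.pt ⟶ c.pt),
      T i ∧ ∀ (y : P) (hy : y ∈ Q \ {x}), c''.ι.app ⟨y, hy⟩ ≫ i = c.ι.app ⟨y, hy.1⟩ := by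
  classical
  have Lsub := ltSub hQ hx
  obtain ⟨cx, hcx, φ, hcomm, hφ⟩ := hG x
  have cx' : Cocone (FQ G {y | y < x}) := cx
  set ψ : cx.pt ⟶ c''.pt := hcx.desc (restrictCocone G Lsub c'') with hψdef
  have hψfac : ∀ (y : P) (hy : y < x), cx.ι.app ⟨y, hy⟩ ≫ ψ = c''.ι.app ⟨y, Lsub hy⟩ :=
    fun y hy => hcx.fac (restrictCocone G Lsub c'') ⟨y, hy⟩
  have hTψ : T ψ := hL cx hcx
  obtain ⟨W, h, i, hpo, hTi⟩ := hpushout φ ψ hφ hTψ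
  -- key computation
  have fact1 : ∀ (y : P) (hy : y < x),
      c''.ι.app ⟨y, Lsub hy⟩ ≫ i = G.map (homOfLE hy.le) ≫ h := by
    intro y hy
    erw [← hψfac y hy, Category.assoc, ← hpo.w, ← Category.assoc, hcomm ⟨y, hy⟩]; rfl
  -- the cocone
  refine ⟨⟨W, ⟨fun y => if hy : (y : P) = x then eqToHom (congrArg G.obj hy) ≫ h
      else c''.ι.app ⟨y, y.2, hy⟩ ≫ i, ?_⟩⟩, ?_, ?_⟩
  · -- naturality
    intro y z f
    change (FQ G Q).map f ≫ _ = _ ≫ 𝟙 W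
    rw [Category.comp_id]
    beta_reduce
    by_cases hz : (z : P) = x
    · by_cases hy : (y : P) = x
      · rw [dif_pos hz, dif_pos hy, ← Category.assoc]
        have e : (FQ G Q).map f = G.map (homOfLE (subMono Q (leOfHom f))) := rfl
        erw [e, posetMapComp G _ hz (eqToHom hy)]
        rw [eqToHom_map]; rfl
      · have hylt : (y : P) < x := lt_of_le_of_ne (hz ▸ (subMono Q (leOfHom f))) hy
        rw [dif_pos hz, dif_neg hy, ← Category.assoc]
        have e : (FQ G Q).map f = G.map (homOfLE (subMono Q (leOfHom f))) := rfl
        erw [e, posetMapComp G _ hz (homOfLE hylt.le)]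
        exact (fact1 y hylt).symm
    · have hy : ¬ ((y : P) = x) := by
        intro hy
        exact hz (hmax z z.2 (hy ▸ subMono Q (leOfHom f)))
      erw [dif_neg hz, dif_neg hy, ← Category.assoc]
      have hw := c''.w (show (⟨(y:P), ⟨y.2, hy⟩⟩ : ↥(Q \ {x})) ⟶ ⟨(z:P), ⟨z.2, hz⟩⟩ from
        homOfLE (subMono Q (leOfHom f)))
      exact congrArg (fun t => t ≫ i) hw
  · -- IsColimit
    have wlem : ∀ (s : Cocone (FQ G Q)),
        φ ≫ s.ι.app ⟨x, hx⟩ = ψ ≫ hc''.desc (restrictCocone G Set.diff_subset s) := by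
      intro s
      apply hcx.hom_ext
      intro j
      erw [← Category.assoc, hcomm j, ← Category.assoc, hψfac j.1 j.2, hc''.fac]
      have hw := s.w (show (⟨(j : P), hQ j.2.le hx⟩ : ↥Q) ⟶ ⟨x, hx⟩ from homOfLE j.2.le)
      exact hw
    refine { desc := fun s => hpo.desc (s.ι.app ⟨x, hx⟩) (hc''.desc (restrictCocone G Set.diff_subset s)) (wlem s), fac := ?_, uniq := ?_ }
    · intro s j
      dsimp only
      by_cases hj : (j : P) = x
      · erw [dif_pos hj, Category.assoc, hpo.inl_desc]
        obtain ⟨jv, hjQ⟩ := j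
        subst hj
        simp only [eqToHom_refl, Category.id_comp]; exact Category.id_comp _
      · erw [dif_neg hj, Category.assoc, hpo.inr_desc]
        exact hc''.fac (restrictCocone G Set.diff_subset s) ⟨j.1, j.2, hj⟩
    · intro s m hm
      dsimp only at hm
      apply hpo.hom_ext
      · erw [hpo.inl_desc]
        have := hm ⟨x, hx⟩
        dsimp only at this
        rw [dif_pos rfl] at this
        refine Eq.trans ?_ this; exact (Category.id_comp (h ≫ m)).symm.trans (Category.assoc (𝟙 _) h m).symm
      · erw [hpo.inr_desc]
        apply hc''.hom_ext
        intro j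
        erw [hc''.fac]
        have := hm ⟨j.1, j.2.1⟩
        dsimp only at this
        rw [dif_neg (show ¬ ((j : P) = x) from j.2.2)] at this
        rw [← Category.assoc]
        exact this
  · -- the map i
    refine ⟨i, hTi, ?_⟩
    intro y hy
    dsimp only
    rw [dif_neg (show ¬ (y = x) from hy.2)]; rfl

lemma isIso_desc {J : Type*} [Category J] {F : J ⥤ D} {c c' : Cocone F}
    (h : IsColimit c) (h' : IsColimit c') : IsIso (h.desc c') := by
  refine ⟨h'.desc c, ?_, ?_⟩
  · apply h.hom_ext; intro j
    rw [← Category.assoc, h.fac, h'.fac]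
    exact (Category.comp_id _).symm
  · apply h'.hom_ext; intro j
    rw [← Category.assoc, h'.fac, h.fac]
    exact (Category.comp_id _).symm

noncomputable def emptyCocone (G : P ⥤ D) [HasInitial D] : Cocone (FQ G (∅ : Set P)) where
  pt := ⊥_ D
  ι := { app := fun y => y.2.elim, naturality := fun y => y.2.elim }

noncomputable def emptyIsColimit (G : P ⥤ D) [HasInitial D] : IsColimit (emptyCocone G) where
  desc s := initial.to s.pt
  fac s j := j.2.elim
  uniq s m hm := initial.hom_ext m _

lemma key [Finite P] [HasInitial D] (T : MorphismProperty D)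
    (hiso : ∀ ⦃X Y : D⦄ (f : X ⟶ Y), IsIso f → T f)
    (hcomp : ∀ ⦃X Y Z : D⦄ (f : X ⟶ Y) (g : Y ⟶ Z), T f → T g → T (f ≫ g))
    (hpushout : ∀ ⦃X Y Z : D⦄ (f : X ⟶ Y) (g : X ⟶ Z), T f → T g →
      ∃ (W : D) (h : Y ⟶ W) (i : Z ⟶ W), IsPushout f g h i ∧ T i)
    (G : P ⥤ D)
    (hG : ∀ x : P,
      ∃ (c : Cocone ((show Monotone (fun y : {y : P // y < x} => (y : P)) from
            fun _ _ h => h).functor ⋙ G)) (_ : IsColimit c) (φ : c.pt ⟶ G.obj x),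
        (∀ y : {y : P // y < x}, c.ι.app y ≫ φ = G.map (homOfLE y.2.le)) ∧ T φ) :
    ∀ (n : ℕ) (Q : Set P), (∀ ⦃a b : P⦄, a ≤ b → b ∈ Q → a ∈ Q) → Q.ncard ≤ n →
    ∃ (c : Cocone (FQ G Q)) (_ : IsColimit c),
      ∀ (Q₀ : Set P) (hsub : Q₀ ⊆ Q), (∀ ⦃a b : P⦄, a ≤ b → b ∈ Q₀ → a ∈ Q₀) →
        ∀ (c₀ : Cocone (FQ G Q₀)) (hc₀ : IsColimit c₀),
          T (hc₀.desc (restrictCocone G hsub c)) := by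
  intro n
  induction n using Nat.strong_induction_on with
  | _ n IH =>
    intro Q hQ hcard
    rcases Q.eq_empty_or_nonempty with rfl | hne
    · refine ⟨emptyCocone G, emptyIsColimit G, ?_⟩
      intro Q₀ hsub h₀ c₀ hc₀
      have hQ₀ : Q₀ = ∅ := Set.subset_empty_iff.mp hsub
      subst hQ₀
      have e : hc₀.desc (restrictCocone G hsub (emptyCocone G)) = hc₀.desc (emptyCocone G) :=
        hc₀.hom_ext (fun j => j.2.elim)
      rw [e]
      exact hiso _ (isIso_desc hc₀ (emptyIsColimit G))
    · -- construct a colimit over Q using some maximal element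
      have hQfin : Q.Finite := Set.toFinite Q
      have hn : 0 < n := lt_of_lt_of_le ((Set.ncard_pos hQfin).mpr hne) hcard
      obtain ⟨x, hx, hxmax'⟩ := Set.Finite.exists_maximalFor id Q hQfin hne
      have hxmax : ∀ y ∈ Q, x ≤ y → y = x := fun y hy hle => le_antisymm (hxmax' hy hle) hle
      have hQ'' : ∀ ⦃a b : P⦄, a ≤ b → b ∈ Q \ {x} → a ∈ Q \ {x} := by
        intro a b hab hb
        refine ⟨hQ hab hb.1, ?_⟩
        intro ha
        exact hb.2 (hxmax b hb.1 ((show a = x from ha) ▸ hab))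
      have hcard'' : (Q \ {x}).ncard ≤ n - 1 := by
        rw [Set.ncard_diff_singleton_of_mem hx]
        omega
      obtain ⟨c'', hc'', hprop''⟩ := IH (n-1) (by omega) (Q \ {x}) hQ'' hcard''
      have hL : ∀ (c₀ : Cocone (FQ G {y | y < x})) (hc₀ : IsColimit c₀),
          T (hc₀.desc (restrictCocone G (ltSub hQ hx) c'')) := by
        intro c₀ hc₀
        exact hprop'' {y | y < x} (ltSub hQ hx)
          (fun a b hab hb => lt_of_le_of_lt hab hb) c₀ hc₀
      obtain ⟨c, hc, i, hTi, hcpt⟩ :=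
        step T hcomp hpushout G hG hQ hx hxmax c'' hc'' hL
      refine ⟨c, hc, ?_⟩
      intro Q₀ hsub h₀ c₀ hc₀
      by_cases hQ₀ : Q₀ = Q
      · subst hQ₀
        have e : hc₀.desc (restrictCocone G hsub c) = hc₀.desc c := by
          apply hc₀.hom_ext
          intro j
          erw [hc₀.fac]
        rw [e]
        exact hiso _ (isIso_desc hc₀ hc)
      · -- pick a maximal element of Q \ Q₀ and redo the construction
        have hne' : (Q \ Q₀).Nonempty := by
          rw [Set.diff_nonempty]
          intro hQsub
          exact hQ₀ (le_antisymm hsub hQsub)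
        obtain ⟨x', hx', hx'max'⟩ :=
          Set.Finite.exists_maximalFor id (Q \ Q₀) hQfin.diff hne'
        have hx'Q : x' ∈ Q := hx'.1
        have hx'max : ∀ y ∈ Q, x' ≤ y → y = x' := by
          intro y hy hle
          by_cases hyQ₀ : y ∈ Q₀
          · exact absurd (h₀ hle hyQ₀) hx'.2
          · exact le_antisymm (hx'max' ⟨hy, hyQ₀⟩ hle) hle
        have hQ''' : ∀ ⦃a b : P⦄, a ≤ b → b ∈ Q \ {x'} → a ∈ Q \ {x'} := by
          intro a b hab hb
          refine ⟨hQ hab hb.1, ?_⟩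
          intro ha
          exact hb.2 (hx'max b hb.1 ((show a = x' from ha) ▸ hab))
        have hcard''' : (Q \ {x'}).ncard ≤ n - 1 := by
          rw [Set.ncard_diff_singleton_of_mem hx'Q]
          omega
        obtain ⟨c''', hc''', hprop'''⟩ := IH (n-1) (by omega) (Q \ {x'}) hQ''' hcard'''
        have hL' : ∀ (c₀ : Cocone (FQ G {y | y < x'})) (hc₀ : IsColimit c₀),
            T (hc₀.desc (restrictCocone G (ltSub hQ hx'Q) c''')) := by
          intro c₁ hc₁
          exact hprop''' {y | y < x'} (ltSub hQ hx'Q)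
            (fun a b hab hb => lt_of_le_of_lt hab hb) c₁ hc₁
        obtain ⟨c', hc', i', hTi', hcpt'⟩ :=
          step T hcomp hpushout G hG hQ hx'Q hx'max c''' hc''' hL'
        have hsub₀ : Q₀ ⊆ Q \ {x'} := by
          intro y hy
          refine ⟨hsub hy, ?_⟩
          intro hyx
          exact hx'.2 ((show y = x' from hyx) ▸ hy)
        have hTd₀ : T (hc₀.desc (restrictCocone G hsub₀ c''')) :=
          hprop''' Q₀ hsub₀ h₀ c₀ hc₀
        have e1 : hc₀.desc (restrictCocone G hsub c') =
            hc₀.desc (restrictCocone G hsub₀ c''') ≫ i' := by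
          apply hc₀.hom_ext
          intro j
          erw [hc₀.fac, ← Category.assoc, hc₀.fac]
          exact (hcpt' j.1 ⟨hsub j.2, fun hj => hx'.2 ((show (j:P) = x' from hj) ▸ j.2)⟩).symm
        have e2 : hc₀.desc (restrictCocone G hsub c) =
            hc₀.desc (restrictCocone G hsub c') ≫ hc'.desc c := by
          apply hc₀.hom_ext
          intro j
          erw [hc₀.fac, ← Category.assoc, hc₀.fac]
          exact (hc'.fac c ⟨j.1, hsub j.2⟩).symm
        rw [e2, e1]
        exact hcomp _ _ (hcomp _ _ hTd₀ hTi') (hiso _ (isIso_desc hc' hc))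

def univRes (G : P ⥤ D) (s : Cocone G) : Cocone (FQ G (Set.univ : Set P)) where
  pt := s.pt
  ι := {
    app := fun j => s.ι.app j.1
    naturality := fun j k f => by
      change (FQ G Set.univ).map f ≫ _ = _ ≫ 𝟙 s.pt
      erw [Category.comp_id]
      exact s.w (homOfLE (leOfHom f)) }

def univExtend (G : P ⥤ D) (c : Cocone (FQ G (Set.univ : Set P))) : Cocone G where
  pt := c.pt
  ι := {
    app := fun y => c.ι.app ⟨y, trivial⟩
    naturality := fun y z f => by
      change G.map f ≫ _ = _ ≫ 𝟙 c.pt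
      erw [Category.comp_id]
      exact c.w (show (⟨y, trivial⟩ : (Set.univ : Set P)) ⟶ ⟨z, trivial⟩ from
        homOfLE (leOfHom f)) }

def univExtendIsColimit (G : P ⥤ D) (c : Cocone (FQ G (Set.univ : Set P)))
    (hc : IsColimit c) : IsColimit (univExtend G c) where
  desc s := hc.desc (univRes G s)
  fac s y := hc.fac (univRes G s) ⟨y, trivial⟩
  uniq s m hm := hc.uniq (univRes G s) m (fun j => hm j.1)

end


/-- Proposition A.2 ("colimlemma") of Brantner–Mathew, for ordinary categories:
given a finite poset `P`, a category `D` with an initial object, and a class `T` of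
morphisms of `D` containing all isomorphisms, closed under composition, and stable under
pushouts (which are required to exist) along morphisms of `T`, any functor `G : P ⥤ D`
such that for each `x` the colimit over `{y | y < x}` exists and the canonical map
`colim_{y < x} G y ⟶ G x` lies in `T`, admits a colimit over `P`, and the map from the
initial object to this colimit lies in `T`. -/
theorem stmt8 {P : Type u} [PartialOrder P] [Finite P]
    {D : Type v} [Category.{w} D] [HasInitial D]
    (T : MorphismProperty D)
    (hiso : ∀ ⦃X Y : D⦄ (f : X ⟶ Y), IsIso f → T f)
    (hcomp : ∀ ⦃X Y Z : D⦄ (f : X ⟶ Y) (g : Y ⟶ Z), T f → T g → T (f ≫ g))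
    (hpushout : ∀ ⦃X Y Z : D⦄ (f : X ⟶ Y) (g : X ⟶ Z), T f → T g →
      ∃ (W : D) (h : Y ⟶ W) (i : Z ⟶ W), IsPushout f g h i ∧ T i)
    (G : P ⥤ D)
    (hG : ∀ x : P,
      ∃ (c : Cocone ((show Monotone (fun y : {y : P // y < x} => (y : P)) from
            fun _ _ h => h).functor ⋙ G)) (_ : IsColimit c) (φ : c.pt ⟶ G.obj x),
        (∀ y : {y : P // y < x}, c.ι.app y ≫ φ = G.map (homOfLE y.2.le)) ∧ T φ) :
    ∃ (c : Cocone G) (_ : IsColimit c), T (initial.to c.pt) := by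
  obtain ⟨c, hc, hprop⟩ := key T hiso hcomp hpushout G hG
    ((Set.univ : Set P).ncard) Set.univ (fun a b _ _ => trivial) le_rfl
  refine ⟨univExtend G c, univExtendIsColimit G c hc, ?_⟩
  have h0 := hprop ∅ (Set.empty_subset _) (fun a b _ h => h.elim)
    (emptyCocone G) (emptyIsColimit G)
  have e : initial.to (univExtend G c).pt =
      (emptyIsColimit G).desc (restrictCocone G (Set.empty_subset _) c) :=
    initial.hom_ext _ _
  rw [e]
  exact h0
end

section
/- Let C be a category that is the union of an increasing chain C^1 ⊆ C^2 ⊆ C^3 ⊆ … of full subcategories, let C_0 ⊆ C be a full subcategory, let D be a category, and let F : C → D be a functor such that, for every n, the restriction F|_{C^n} is a pointwise left Kan extension of its restriction to the full subcategory C_0 ∩ C^n along the inclusion C_0 ∩ C^n ⊆ C^n. Then F is a pointwise left Kan extension of F|_{C_0} along the inclusion C_0 ⊆ C. -/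
open CategoryTheory CategoryTheory.Limits

universe v v' u u'

/-- The canonical cocone on `F` over the comma category `(C₀)_{/x}` of objects of the
full subcategory `C₀ = {c : C | Q c}` equipped with a morphism to `x`; its components
are given by `F.map` of the structure morphisms. A functor `F` is a pointwise left Kan
extension of its restriction to `C₀` exactly if this cocone is a colimit cocone for
every `x`. -/
def canonicalCocone {C : Type u} [Category.{v} C] {D : Type u'} [Category.{v'} D]
    (Q : C → Prop) (F : C ⥤ D) (x : C) :
    Cocone (CostructuredArrow.proj (ObjectProperty.ι Q) x ⋙
      ObjectProperty.ι Q ⋙ F) where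
  pt := F.obj x
  ι :=
    { app := fun a => F.map a.hom
      naturality := fun a b φ => by
        dsimp
        rw [Category.comp_id]
        exact (F.map_comp _ _).symm.trans (congrArg F.map (CostructuredArrow.w φ)) }

section Aux

variable {C : Type u} [Category.{v} C] {D : Type u'} [Category.{v'} D]

/-- Embedding of the level-`n` comma category into the global one. -/
def levelFunctor (P₀ : C → Prop) (Pc : ℕ → C → Prop) (n : ℕ)
    (x : CategoryTheory.ObjectProperty.FullSubcategory (Pc n)) :
    CostructuredArrow (ObjectProperty.ι
      (fun b : CategoryTheory.ObjectProperty.FullSubcategory (Pc n) => P₀ b.obj)) x ⥤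
    CostructuredArrow (ObjectProperty.ι P₀) x.obj where
  obj a := ⟨⟨a.left.obj.obj, a.left.property⟩, a.right, a.hom.hom⟩
  map {a b} φ := ⟨ObjectProperty.homMk φ.left.hom.hom, φ.right, by
    have := φ.w
    simpa using congrArg (fun f => f.hom) this⟩

end Aux

section Aux2

variable {C : Type u} [Category.{v} C] {D : Type u'} [Category.{v'} D]

/-- The level-`n` canonical cocone is the whisker of the global one. -/
lemma level_whisker (P₀ : C → Prop) (Pc : ℕ → C → Prop) (F : C ⥤ D) (n : ℕ)
    (x : CategoryTheory.ObjectProperty.FullSubcategory (Pc n)) :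
    canonicalCocone (fun b : CategoryTheory.ObjectProperty.FullSubcategory (Pc n) => P₀ b.obj)
        (ObjectProperty.ι (Pc n) ⋙ F) x =
      (canonicalCocone P₀ F x.obj).whisker (levelFunctor P₀ Pc n x) := rfl

omit [Category.{v, u} C] in
lemma pc_mono (Pc : ℕ → C → Prop) (hchain : ∀ n x, Pc n x → Pc (n + 1) x)
    {m n : ℕ} (h : m ≤ n) {x : C} (hx : Pc m x) : Pc n x := by
  induction h with
  | refl => exact hx
  | step _ ih => exact hchain _ _ ih

end Aux2

/-- The Remark after Corollary 3.10 of Brantner–Mathew, for ordinary categories: if `C`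
is the union of an increasing chain of full subcategories `Cⁿ` (given by predicates
`Pc n`), `C₀ ⊆ C` is a full subcategory (given by the predicate `P₀`), and
`F : C ⥤ D` restricts on each `Cⁿ` to a pointwise left Kan extension of its restriction
to `C₀ ∩ Cⁿ`, then `F` is a pointwise left Kan extension of its restriction to `C₀`. -/
theorem stmt10 {C : Type u} [Category.{v} C] {D : Type u'} [Category.{v'} D]
    (P₀ : C → Prop) (Pc : ℕ → C → Prop)
    (hchain : ∀ n x, Pc n x → Pc (n + 1) x)
    (hunion : ∀ x : C, ∃ n, Pc n x)
    (F : C ⥤ D)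
    (hLKE : ∀ (n : ℕ) (x : CategoryTheory.ObjectProperty.FullSubcategory (Pc n)),
      Nonempty (IsColimit (canonicalCocone
        (fun b : CategoryTheory.ObjectProperty.FullSubcategory (Pc n) => P₀ b.obj)
        (ObjectProperty.ι (Pc n) ⋙ F) x))) :
    ∀ x : C, Nonempty (IsColimit (canonicalCocone P₀ F x)) := by
  intro x
  obtain ⟨n₀, hx₀⟩ := hunion x
  -- colimit structure at any level containing x
  have key : ∀ (N : ℕ) (hxN : Pc N x),
      IsColimit ((canonicalCocone P₀ F x).whisker
        (levelFunctor P₀ Pc N ⟨x, hxN⟩)) := fun N hxN => by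
    have h := (hLKE N ⟨x, hxN⟩).some
    rw [level_whisker P₀ Pc F N ⟨x, hxN⟩] at h
    exact h
  have h₀ := key n₀ hx₀
  refine ⟨{ desc := fun s => h₀.desc (s.whisker _), fac := ?_, uniq := ?_ }⟩
  · intro s j
    obtain ⟨m, hm⟩ := hunion j.left.obj
    set N := max n₀ m with hN
    have hxN : Pc N x := pc_mono Pc hchain (le_max_left _ _) hx₀
    have hjN : Pc N j.left.obj := pc_mono Pc hchain (le_max_right _ _) hm
    have hNcol := key N hxN
    -- the lift of j to level N
    let jN : CostructuredArrow (ObjectProperty.ι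
        (fun b : CategoryTheory.ObjectProperty.FullSubcategory (Pc N) => P₀ b.obj)) (⟨x, hxN⟩ : CategoryTheory.ObjectProperty.FullSubcategory (Pc N)) :=
      ⟨⟨⟨j.left.obj, hjN⟩, j.left.property⟩, j.right, ObjectProperty.homMk j.hom⟩
    have hj : (levelFunctor P₀ Pc N ⟨x, hxN⟩).obj jN = j := rfl
    -- the two descents agree
    have hdesc : h₀.desc (s.whisker _) = hNcol.desc (s.whisker _) := by
      refine (h₀.uniq (s.whisker _) _ fun a => ?_).symm
      -- lift a to level N
      let aN : CostructuredArrow (ObjectProperty.ι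
          (fun b : CategoryTheory.ObjectProperty.FullSubcategory (Pc N) => P₀ b.obj)) (⟨x, hxN⟩ : CategoryTheory.ObjectProperty.FullSubcategory (Pc N)) :=
        ⟨⟨⟨a.left.obj.obj, pc_mono Pc hchain (le_max_left _ _) a.left.obj.property⟩,
          a.left.property⟩, a.right, ObjectProperty.homMk a.hom.hom⟩
      exact hNcol.fac (s.whisker _) aN
    have hfac := hNcol.fac (s.whisker _) jN
    dsimp only at hfac ⊢
    rw [hdesc]
    exact hfac
  · intro s m hm
    exact h₀.uniq (s.whisker _) m fun a => hm ((levelFunctor P₀ Pc n₀ ⟨x, hx₀⟩).obj a)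
end
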